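/- Let g be a 3-Lie algebra and N: g → g a Nijenhuis operator. Then ω = [·,·,·]_N defined by ω(x₁,x₂,x₃) = [Nx₁,x₂,x₃] + [x₁,Nx₂,x₃] + [x₁,x₂,Nx₃] − N[x₁,x₂,x₃] is a 1-cocycle of g with coefficients in the adjoint representation. -/
import Mathlib


/-- Deformation of a trilinear bracket `μ` by a linear operator `M`:
`μ_M(x₁,x₂,x₃) = μ(Mx₁,x₂,x₃) + μ(x₁,Mx₂,x₃) + μ(x₁,x₂,Mx₃) − M μ(x₁,x₂,x₃)`. -/
def deform {K : Type*} [Field K] {g : Type*} [AddCommGroup g] [Module K g]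
    (M : Module.End K g) (μ : g → g → g → g) : g → g → g → g :=
  fun x y z => μ (M x) y z + μ x (M y) z + μ x y (M z) - M (μ x y z)

/-- `N` is a Nijenhuis operator for the 3-Lie bracket `b`: conditions (17) and (15). -/
def IsNijenhuis {K : Type*} [Field K] {g : Type*} [AddCommGroup g] [Module K g]
    (b : g →ₗ[K] g →ₗ[K] g →ₗ[K] g) (N : Module.End K g) : Prop :=
  (∀ x y z, N (deform N (fun u v w => b u v w) x y z)
      = b (N x) (N y) z + b (N x) y (N z) + b x (N y) (N z))
  ∧ (∀ x y z, b (N x) (N y) (N z) = 0)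

set_option maxHeartbeats 2000000 in
/-- for a Nijenhuis operator `N`, the deformed bracket `ω = [·,·,·]_N` is a
1-cocycle of `g` with coefficients in the adjoint representation. -/
theorem threeLie_nijenhuis_deformed_bracket_cocycle
    {K : Type*} [Field K] {g : Type*} [AddCommGroup g] [Module K g]
    (b : g →ₗ[K] g →ₗ[K] g →ₗ[K] g)
    (hb1 : ∀ x y z, b x y z = - b y x z)
    (hb2 : ∀ x y z, b x y z = - b x z y)
    (hfi : ∀ x₁ x₂ y₁ y₂ y₃, b x₁ x₂ (b y₁ y₂ y₃)
      = b (b x₁ x₂ y₁) y₂ y₃ + b y₁ (b x₁ x₂ y₂) y₃ + b y₁ y₂ (b x₁ x₂ y₃))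
    (N : Module.End K g) (hN : IsNijenhuis b N) :
    ∀ x₁ x₂ y₁ y₂ y₃ : g,
      deform N (fun u v w => b u v w) x₁ x₂ (b y₁ y₂ y₃)
          + b x₁ x₂ (deform N (fun u v w => b u v w) y₁ y₂ y₃)
        = deform N (fun u v w => b u v w) (b x₁ x₂ y₁) y₂ y₃
          + deform N (fun u v w => b u v w) y₁ (b x₁ x₂ y₂) y₃
          + deform N (fun u v w => b u v w) y₁ y₂ (b x₁ x₂ y₃)
          + b (deform N (fun u v w => b u v w) x₁ x₂ y₁) y₂ y₃
          + b y₁ (deform N (fun u v w => b u v w) x₁ x₂ y₂) y₃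
          + b y₁ y₂ (deform N (fun u v w => b u v w) x₁ x₂ y₃) := by
  intro x₁ x₂ y₁ y₂ y₃
  simp only [deform, map_add, map_sub, LinearMap.add_apply, LinearMap.sub_apply]
  rw [hfi (N x₁) x₂ y₁ y₂ y₃, hfi x₁ (N x₂) y₁ y₂ y₃,
      hfi x₁ x₂ (N y₁) y₂ y₃, hfi x₁ x₂ y₁ (N y₂) y₃, hfi x₁ x₂ y₁ y₂ (N y₃),
      hfi x₁ x₂ y₁ y₂ y₃]
  simp only [map_add]
  abel
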